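/- For a σ-set A, every element M of the integer space 3^A has a unique inverse in 3^A under fusion: there exists a unique M' ∈ 3^A with M ⊕ M' = ∅, namely M' = star '' M. -/
import Mathlib


variable {α : Type*} [DecidableEq α]

/-- The *-intersection: `A ∗∩ B = {x ∈ A : star x ∈ B}`. -/
def sInter (star : α → α) (A B : Finset α) : Finset α :=
  A.filter (fun x => star x ∈ B)

/-- The *-difference: `A ∗ B = A \ (A ∗∩ B)`. -/
def sDiff (star : α → α) (A B : Finset α) : Finset α :=
  A \ sInter star A B

/-- The fusion: `A ⊕ B = (A ∗ B) ∪ (B ∗ A)`. -/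
def fusion (star : α → α) (A B : Finset α) : Finset α :=
  sDiff star A B ∪ sDiff star B A

/-- A σ-set: never contains an element together with its anti-element. -/
def IsSigmaSet (star : α → α) (A : Finset α) : Prop :=
  ∀ x ∈ A, star x ∉ A

/-- The generated space `⟨2^A, 2^B⟩ = {X ⊕ Y : X ⊆ A, Y ⊆ B}`. -/
def genSpace (star : α → α) (A B : Finset α) : Finset (Finset α) :=
  (A.powerset ×ˢ B.powerset).image (fun p => fusion star p.1 p.2)

lemma mem_image_star' {star : α → α} (hinv : Function.Involutive star)
    (M : Finset α) (x : α) : x ∈ M.image star ↔ star x ∈ M := by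
  simp only [Finset.mem_image]
  constructor
  · rintro ⟨a, ha, rfl⟩; rwa [hinv a]
  · intro h; exact ⟨star x, h, hinv x⟩

lemma mem_fusion' (star : α → α) (X Y : Finset α) (x : α) :
    x ∈ fusion star X Y ↔ (x ∈ X ∧ star x ∉ Y) ∨ (x ∈ Y ∧ star x ∉ X) := by
  simp only [fusion, sDiff, sInter, Finset.mem_union, Finset.mem_sdiff, Finset.mem_filter]
  tauto

lemma fusion_empty_iff' {star : α → α} (hinv : Function.Involutive star)
    (M N : Finset α) : fusion star M N = ∅ ↔ N = M.image star := by
  constructor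
  · intro h
    ext x
    rw [mem_image_star' hinv]
    have h1 := Finset.eq_empty_iff_forall_notMem.mp h x
    have h2 := Finset.eq_empty_iff_forall_notMem.mp h (star x)
    rw [mem_fusion'] at h1 h2
    rw [hinv x] at h2
    tauto
  · rintro rfl
    rw [Finset.eq_empty_iff_forall_notMem]
    intro x h
    rw [mem_fusion'] at h
    rw [mem_image_star' hinv, mem_image_star' hinv, hinv x] at h
    tauto

theorem stmt_14 (star : α → α) (hinv : Function.Involutive star)
    (hne : ∀ x, star x ≠ x) (A : Finset α) (hA : IsSigmaSet star A)
    (M : Finset α) (hM : M ∈ genSpace star A (A.image star)) :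
    (M.image star ∈ genSpace star A (A.image star) ∧
      fusion star M (M.image star) = ∅) ∧
    (∀ M' ∈ genSpace star A (A.image star),
      fusion star M M' = ∅ → M' = M.image star) := by
  refine ⟨⟨?_, (fusion_empty_iff' hinv M _).mpr rfl⟩,
    fun M' _ h => (fusion_empty_iff' hinv M M').mp h⟩
  simp only [genSpace, Finset.mem_image, Finset.mem_product, Finset.mem_powerset,
    Prod.exists] at hM ⊢
  obtain ⟨X, Y, ⟨hX, hY⟩, rfl⟩ := hM
  refine ⟨Y.image star, X.image star, ⟨?_, Finset.image_subset_image hX⟩, ?_⟩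
  · intro x hx
    rw [mem_image_star' hinv] at hx
    have := hY hx
    rw [mem_image_star' hinv, hinv x] at this
    exact this
  · ext x
    rw [mem_image_star' hinv, mem_fusion', mem_fusion',
      mem_image_star' hinv, mem_image_star' hinv, mem_image_star' hinv,
      mem_image_star' hinv, hinv x]
    tauto
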